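/- Let κ > 2 and α ∈ ℝ, α ≠ 0. Suppose b : [−1,1] → ℝ is continuous, even (b(−x) = b(x) for all x), twice continuously differentiable on (−1,1), not identically zero, and satisfies the nonlocal Legendre-type equation (1 − x²)b''(x) − 2x b'(x) − α b(x) = (κ/π)∫_{−1}^{1} b(y)/√(1 − y²) dy for all x ∈ (−1,1). Set λ := (κ/π)∫_{−1}^{1} b(y)/√(1 − y²) dy. Then either (i) b is a nonzero constant and α = −κ, or (ii) there exist a positive integer n and a real number B ≠ 0 such that α = −2n(2n+1) and b(x) = B·P_{2n}(x) − λ/α for all x ∈ [−1,1], where P_{2n} is the Legendre polynomial of degree 2n. In particular α ≤ −min(κ, 6) < −2, so every corresponding separated mode of the linearised flow decays exponentially. -/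

import Mathlib

open Real

/-- The Legendre polynomial `P_n`, defined by the Rodrigues formula
`P_n = 1/(2ⁿ n!) · dⁿ/dxⁿ (x² − 1)ⁿ`. -/
noncomputable def legendre (n : ℕ) : Polynomial ℝ :=
  ((1 : ℝ) / (2^n * n.factorial)) • (Polynomial.derivative^[n] ((Polynomial.X^2 - 1)^n))

open Set Filter Topology Polynomial intervalIntegral
open MeasureTheory (volume ae_of_all Ioc_ae_eq_Icc Measure)

/-!
Subtracting the constant `-λ/α` turns the equation into Legendre's equation
`(1 - x²)u'' - 2xu' + μu = 0` with `μ = -α`. If `u ≡ 0`, then `b` is constant, and computing `λ`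
through the substitution `y = cos θ` forces `α = -κ`.

Otherwise, since `((1 - x²)u')' = -μu` is continuous up to `±1`, the flux `(1 - x²)u'` has limits
at `±1`, and they vanish because a nonzero limit would make `u` grow like `log (1 ∓ x)`. Hence
Green's identity `∫ u ((1 - x²)q'' - 2xq' + μq) = 0` holds for every polynomial `q`; for `q = Xᵏ`
it is a three-term recurrence for the moments `mₖ = ∫ u xᵏ`, which forces all moments to vanish
unless `μ = l(l+1)` with `m_l ≠ 0`, and by Weierstrass a continuous function with vanishing moments
is zero. The moments `pₖ` of `P_l` satisfy the same recurrence, so those of `u - (m_l / p_l) P_l`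
vanish and `u` is a multiple of `P_l`; evenness of `u` kills the odd moments, so `l` is even.
-/

theorem Polynomial.iterate_derivative_X_mul {R : Type*} [CommSemiring R] (p : R[X]) (n : ℕ) :
    derivative^[n + 1] (X * p) = X * derivative^[n + 1] p + (n + 1 : R[X]) * derivative^[n] p := by
  induction n with
  | zero => simp [derivative_mul, add_comm]
  | succ n ih =>
    rw [Function.iterate_succ_apply', ih, Function.iterate_succ_apply' _ (n + 1),
      Function.iterate_succ_apply' _ n]
    simp only [derivative_add, derivative_mul, derivative_X, one_mul, derivative_natCast,
      derivative_one, add_zero, zero_mul, zero_add, Nat.cast_add, Nat.cast_one]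
    ring

theorem Polynomial.iterate_derivative_X_sq_sub_one_mul_derivative {R : Type*} [CommRing R]
    (p : R[X]) (n : ℕ) :
    derivative^[n + 1] ((X ^ 2 - 1) * derivative p) = (X ^ 2 - 1) * derivative^[n + 2] p
      + 2 * (n + 1 : R[X]) * X * derivative^[n + 1] p
      + (n + 1 : R[X]) * (n : R[X]) * derivative^[n] p := by
  induction n with
  | zero =>
    simp only [zero_add, derivative_mul, derivative_sub,
      derivative_X_pow_succ, Nat.cast_one, map_add, map_one, pow_one, derivative_one, sub_zero,
      Function.iterate_succ, Function.comp_apply, Nat.cast_zero, mul_one, mul_zero,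
      Function.iterate_zero, id_eq, zero_mul, add_zero]
    ring
  | succ n ih =>
    rw [Function.iterate_succ_apply', ih, Function.iterate_succ_apply' _ (n + 2),
      Function.iterate_succ_apply' _ (n + 1), Function.iterate_succ_apply' _ n]
    simp only [derivative_mul, derivative_sub, derivative_X_pow_succ, Nat.cast_one,
      map_add, map_one, pow_one, derivative_one, sub_zero, derivative_ofNat, zero_mul,
      derivative_natCast, add_zero, mul_zero, derivative_X, mul_one, zero_add, Nat.cast_add]
    ring

theorem legendre_ode (l : ℕ) :
    (1 - X ^ 2) * derivative (derivative (legendre l)) - 2 * X * derivative (legendre l)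
      + (l * (l + 1) : ℝ[X]) * legendre l = 0 := by
  simp only [legendre, smul_eq_C_mul, derivative_C_mul]
  set v : ℝ[X] := (X ^ 2 - 1) ^ l
  have hv : (X ^ 2 - 1) * derivative v = ((2 * l : ℕ) : ℝ[X]) * (X * v) := by
    cases l with
    | zero => simp [v]
    | succ m =>
      simp only [v, derivative_pow_succ, map_add, map_natCast, map_one, derivative_sub,
        Nat.cast_one, pow_one, derivative_X, mul_one, derivative_one, sub_zero, Nat.cast_mul,
        Nat.cast_ofNat, Nat.cast_add]
      ring
  have h := congrArg (derivative^[l + 1]) hv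
  rw [iterate_derivative_X_sq_sub_one_mul_derivative, iterate_derivative_natCast_mul,
    iterate_derivative_X_mul] at h
  simp only [Function.iterate_succ_apply'] at h
  push_cast at h
  linear_combination -C ((1 : ℝ) / (2 ^ l * l.factorial)) * h

theorem legendre_ne_zero (l : ℕ) : legendre l ≠ 0 := by
  have hmonic : (X ^ 2 - C 1 : ℝ[X]).Monic := monic_X_pow_sub_C 1 two_ne_zero
  have hlead : ((X ^ 2 - 1 : ℝ[X]) ^ l).coeff (l + l) = 1 := by
    have := (hmonic.pow l).coeff_natDegree
    rwa [hmonic.natDegree_pow, natDegree_X_pow_sub_C, map_one, mul_two] at this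
  intro h
  have := congrArg (coeff · l) h
  simp [legendre, coeff_iterate_derivative, hlead, Nat.descFactorial_eq_zero_iff_lt,
    Nat.factorial_ne_zero] at this

theorem eq_zero_of_tendsto_sub_mul_deriv_nhdsLT {f f' : ℝ → ℝ} {b c L : ℝ}
    (hf : Tendsto f (𝓝[<] b) (𝓝 c)) (hderiv : ∀ᶠ x in 𝓝[<] b, HasDerivAt f (f' x) x)
    (hL : Tendsto (fun x => (b - x) * f' x) (𝓝[<] b) (𝓝 L)) : L = 0 := by
  by_contra hL0
  obtain ⟨a, hab, ha⟩ : ∃ a < b, ∀ x ∈ Ioo a b,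
      HasDerivAt f (f' x) x ∧ |(b - x) * f' x - L| < |L| / 2 :=
    mem_nhdsLT_iff_exists_Ioo_subset.1
      (hderiv.and (hL.eventually (Metric.ball_mem_nhds L (by positivity))))
  have hjump : ∀ x ∈ Ioo a b, |L| / 4 ≤ |f ((x + b) / 2) - f x| := by
    intro x hx
    have hsub : Icc x ((x + b) / 2) ⊆ Ioo a b := fun y hy =>
      ⟨by linarith [hx.1, hy.1], by linarith [hx.2, hy.2]⟩
    obtain ⟨ξ, hξ, hslope⟩ := exists_hasDerivAt_eq_slope f f' (by linarith [hx.2])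
      (fun y hy => (ha y (hsub hy)).1.continuousAt.continuousWithinAt)
      (fun y hy => (ha y (hsub (Ioo_subset_Icc_self hy))).1)
    have hξL := (ha ξ (hsub (Ioo_subset_Icc_self hξ))).2
    have hmvt : f ((x + b) / 2) - f x = f' ξ * ((b - x) / 2) := by
      rw [hslope, show (x + b) / 2 - x = (b - x) / 2 by ring,
        div_mul_cancel₀ _ (by linarith [hx.2] : (b - x) / 2 ≠ 0)]
    have hbξ : 0 < b - ξ := by linarith [hξ.2, hx.2]
    have : |L| / 2 < (b - ξ) * |f' ξ| := by
      rw [← abs_of_pos hbξ, ← abs_mul]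
      linarith [abs_sub_abs_le_abs_sub L ((b - ξ) * f' ξ), abs_sub_comm L ((b - ξ) * f' ξ)]
    rw [hmvt, abs_mul, abs_of_pos (by linarith [hx.2] : 0 < (b - x) / 2)]
    nlinarith [abs_nonneg (f' ξ), hξ.1]
  have hmid : Tendsto (fun x => (x + b) / 2) (𝓝[<] b) (𝓝[<] b) := by
    refine tendsto_nhdsWithin_iff.2 ⟨?_, eventually_nhdsWithin_of_forall fun x hx => ?_⟩
    · exact ((by fun_prop : Continuous fun x : ℝ => (x + b) / 2).tendsto' b b
        (by ring)).mono_left nhdsWithin_le_nhds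
    · simp only [mem_Iio] at hx ⊢; linarith
  have hlim : Tendsto (fun x => f ((x + b) / 2) - f x) (𝓝[<] b) (𝓝 0) := by
    simpa using (hf.comp hmid).sub hf
  obtain ⟨x, hsmall, hx⟩ := ((hlim.eventually (Metric.ball_mem_nhds 0
    (by positivity : 0 < |L| / 4))).and (Ioo_mem_nhdsLT hab)).exists
  rw [Real.dist_0_eq_abs] at hsmall
  linarith [hjump x hx]

theorem eq_zero_of_tendsto_sub_mul_deriv_nhdsGT {f f' : ℝ → ℝ} {a c L : ℝ}
    (hf : Tendsto f (𝓝[>] a) (𝓝 c)) (hderiv : ∀ᶠ x in 𝓝[>] a, HasDerivAt f (f' x) x)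
    (hL : Tendsto (fun x => (x - a) * f' x) (𝓝[>] a) (𝓝 L)) : L = 0 := by
  have hneg : Tendsto Neg.neg (𝓝[<] (-a)) (𝓝[>] a) := tendsto_neg_nhdsLT_neg
  refine neg_eq_zero.1 (eq_zero_of_tendsto_sub_mul_deriv_nhdsLT (f := fun x => f (-x))
    (f' := fun x => -f' (-x)) (hf.comp hneg) ((hneg.eventually hderiv).mono fun x hx => ?_)
    ((hL.neg.comp hneg).congr fun x => ?_))
  · simpa [Function.comp_def] using hx.comp x (hasDerivAt_neg x)
  · simp only [Function.comp_apply]; ring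

theorem tendsto_nhdsWithin_Ioo_of_hasDerivAt {w g : ℝ → ℝ} {a b c y : ℝ} (hc : c ∈ Ioo a b)
    (hy : y ∈ Icc a b) (hg : ContinuousOn g (Icc a b))
    (hw : ∀ x ∈ Ioo a b, HasDerivAt w (g x) x) :
    Tendsto w (𝓝[Ioo a b] y) (𝓝 (w c + ∫ t in c..y, g t)) := by
  have hab : a ≤ b := hc.1.le.trans hc.2.le
  have hprim : ContinuousOn (fun x => w c + ∫ t in c..x, g t) (Icc a b) := by
    have := continuousOn_primitive_interval' (hg.intervalIntegrable_of_Icc (μ := volume) hab)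
      (by rw [uIcc_of_le hab]; exact Ioo_subset_Icc_self hc)
    rw [uIcc_of_le hab] at this
    exact continuousOn_const.add this
  have heq : EqOn w (fun x => w c + ∫ t in c..x, g t) (Ioo a b) := by
    intro x hx
    have hsub : uIcc c x ⊆ Ioo a b := ordConnected_Ioo.uIcc_subset hc hx
    show w x = w c + _
    rw [integral_eq_sub_of_hasDerivAt (fun t ht => hw t (hsub ht))
      ((hg.mono (hsub.trans Ioo_subset_Icc_self)).intervalIntegrable)]
    ring
  exact ((hprim y hy).mono Ioo_subset_Icc_self).tendsto.congr'
    (eventuallyEq_nhdsWithin_of_eqOn heq).symm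

structure IsLegendreSolution (μ : ℝ) (u : ℝ → ℝ) : Prop where
  continuousOn : ContinuousOn u (Icc (-1) 1)
  differentiableOn : DifferentiableOn ℝ u (Ioo (-1) 1)
  differentiableOn_deriv : DifferentiableOn ℝ (deriv u) (Ioo (-1) 1)
  ode : ∀ x ∈ Ioo (-1 : ℝ) 1, (1 - x ^ 2) * deriv (deriv u) x - 2 * x * deriv u x + μ * u x = 0

namespace IsLegendreSolution

variable {μ : ℝ} {u : ℝ → ℝ}

theorem hasDerivAt (hu : IsLegendreSolution μ u) {x : ℝ} (hx : x ∈ Ioo (-1 : ℝ) 1) :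
    HasDerivAt u (deriv u x) x :=
  (hu.differentiableOn.differentiableAt (isOpen_Ioo.mem_nhds hx)).hasDerivAt

theorem hasDerivAt_deriv (hu : IsLegendreSolution μ u) {x : ℝ} (hx : x ∈ Ioo (-1 : ℝ) 1) :
    HasDerivAt (deriv u) (deriv (deriv u) x) x :=
  (hu.differentiableOn_deriv.differentiableAt (isOpen_Ioo.mem_nhds hx)).hasDerivAt

theorem tendsto_nhdsLT_one (hu : IsLegendreSolution μ u) : Tendsto u (𝓝[<] 1) (𝓝 (u 1)) :=
  ((hu.continuousOn 1 (by norm_num)).mono_of_mem_nhdsWithin (Icc_mem_nhdsLT (by norm_num))).tendsto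

theorem tendsto_nhdsGT_neg_one (hu : IsLegendreSolution μ u) :
    Tendsto u (𝓝[>] (-1)) (𝓝 (u (-1))) :=
  ((hu.continuousOn (-1) (by norm_num)).mono_of_mem_nhdsWithin
    (Icc_mem_nhdsGT (by norm_num))).tendsto

theorem hasDerivAt_one_sub_sq_mul_deriv (hu : IsLegendreSolution μ u) {x : ℝ}
    (hx : x ∈ Ioo (-1 : ℝ) 1) :
    HasDerivAt (fun x => (1 - x ^ 2) * deriv u x) (-(μ * u x)) x := by
  refine (((hasDerivAt_pow 2 x).const_sub 1).mul (hu.hasDerivAt_deriv hx)).congr_deriv ?_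
  linear_combination hu.ode x hx

theorem tendsto_one_sub_sq_mul_deriv_nhdsLT_one (hu : IsLegendreSolution μ u) :
    Tendsto (fun x => (1 - x ^ 2) * deriv u x) (𝓝[<] 1) (𝓝 0) := by
  obtain ⟨L, hw⟩ : ∃ L, Tendsto (fun x => (1 - x ^ 2) * deriv u x) (𝓝[<] 1) (𝓝 L) := by
    rw [← nhdsWithin_Ioo_eq_nhdsLT (by norm_num : (-1 : ℝ) < 1)]
    exact ⟨_, tendsto_nhdsWithin_Ioo_of_hasDerivAt (c := 0) (by norm_num) (by norm_num)
      (hu.continuousOn.const_mul μ).neg fun x hx => hu.hasDerivAt_one_sub_sq_mul_deriv hx⟩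
  have hIoo : Ioo (-1 : ℝ) 1 ∈ 𝓝[<] 1 := Ioo_mem_nhdsLT (by norm_num)
  have hL : L / 2 = 0 := by
    refine eq_zero_of_tendsto_sub_mul_deriv_nhdsLT (f' := deriv u) hu.tendsto_nhdsLT_one
      (mem_of_superset hIoo fun x hx => hu.hasDerivAt hx) ?_
    have h2 : Tendsto (fun x : ℝ => 1 + x) (𝓝[<] 1) (𝓝 2) :=
      ((continuous_const.add continuous_id).tendsto' 1 2 (by norm_num)).mono_left
        nhdsWithin_le_nhds
    refine (hw.div h2 two_ne_zero).congr' (mem_of_superset hIoo fun x hx => ?_)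
    have : 1 + x ≠ 0 := by linarith [hx.1]
    simp only [mem_ofPred_eq, Pi.div_apply]
    field_simp
    ring
  rwa [show L = 0 by linarith] at hw

theorem tendsto_one_sub_sq_mul_deriv_nhdsGT_neg_one (hu : IsLegendreSolution μ u) :
    Tendsto (fun x => (1 - x ^ 2) * deriv u x) (𝓝[>] (-1)) (𝓝 0) := by
  obtain ⟨L, hw⟩ : ∃ L, Tendsto (fun x => (1 - x ^ 2) * deriv u x) (𝓝[>] (-1)) (𝓝 L) := by
    rw [← nhdsWithin_Ioo_eq_nhdsGT (by norm_num : (-1 : ℝ) < 1)]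
    exact ⟨_, tendsto_nhdsWithin_Ioo_of_hasDerivAt (c := 0) (by norm_num) (by norm_num)
      (hu.continuousOn.const_mul μ).neg fun x hx => hu.hasDerivAt_one_sub_sq_mul_deriv hx⟩
  have hIoo : Ioo (-1 : ℝ) 1 ∈ 𝓝[>] (-1) := Ioo_mem_nhdsGT (by norm_num)
  have hL : L / 2 = 0 := by
    refine eq_zero_of_tendsto_sub_mul_deriv_nhdsGT (f' := deriv u) hu.tendsto_nhdsGT_neg_one
      (mem_of_superset hIoo fun x hx => hu.hasDerivAt hx) ?_
    have h2 : Tendsto (fun x : ℝ => 1 - x) (𝓝[>] (-1)) (𝓝 2) :=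
      ((continuous_const.sub continuous_id).tendsto' (-1) 2 (by norm_num)).mono_left
        nhdsWithin_le_nhds
    refine (hw.div h2 two_ne_zero).congr' (mem_of_superset hIoo fun x hx => ?_)
    have : 1 - x ≠ 0 := by linarith [hx.2]
    simp only [mem_ofPred_eq, Pi.div_apply]
    field_simp
    ring
  rwa [show L = 0 by linarith] at hw

theorem integral_mul_eval_eq_zero (hu : IsLegendreSolution μ u) (q : ℝ[X]) :
    ∫ x in (-1 : ℝ)..1, u x * ((1 - x ^ 2) * (derivative (derivative q)).eval x
      - 2 * x * (derivative q).eval x + μ * q.eval x) = 0 := by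
  set W : ℝ → ℝ := fun x => u x * ((1 - x ^ 2) * (derivative q).eval x)
    - q.eval x * ((1 - x ^ 2) * deriv u x)
  have hderiv : ∀ x ∈ Ioo (-1 : ℝ) 1, HasDerivAt W (u x * ((1 - x ^ 2) *
      (derivative (derivative q)).eval x - 2 * x * (derivative q).eval x + μ * q.eval x)) x := by
    intro x hx
    have hq' : HasDerivAt (fun x => (1 - x ^ 2) * (derivative q).eval x)
        (-(2 * x) * (derivative q).eval x + (1 - x ^ 2) * (derivative (derivative q)).eval x) x :=
      (((hasDerivAt_pow 2 x).const_sub 1).mul ((derivative q).hasDerivAt x)).congr_deriv (by ring)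
    refine (((hu.hasDerivAt hx).mul hq').sub ((q.hasDerivAt x).mul
      (hu.hasDerivAt_one_sub_sq_mul_deriv hx))).congr_deriv ?_
    ring
  have hint : IntervalIntegrable (fun x => u x * ((1 - x ^ 2) *
      (derivative (derivative q)).eval x - 2 * x * (derivative q).eval x + μ * q.eval x))
      volume (-1) 1 :=
    (hu.continuousOn.mul (by fun_prop)).intervalIntegrable_of_Icc (by norm_num)
  have hW : ∀ {y : ℝ} {l : Filter ℝ}, y ^ 2 = 1 → l ≤ 𝓝 y → Tendsto u l (𝓝 (u y)) →
      Tendsto (fun x => (1 - x ^ 2) * deriv u x) l (𝓝 0) → Tendsto W l (𝓝 0) := by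
    intro y l hy hl hul hw
    have hq' : Tendsto (fun x => (1 - x ^ 2) * (derivative q).eval x) l (𝓝 0) := by
      have := ((by fun_prop : Continuous fun x : ℝ => (1 - x ^ 2) * (derivative q).eval x).tendsto
        y).mono_left hl
      rwa [hy, sub_self, zero_mul] at this
    simpa using (hul.mul hq').sub ((((q.continuous.tendsto y).mono_left hl)).mul hw)
  have := integral_eq_sub_of_hasDerivAt_of_tendsto (by norm_num) hderiv hint
    (hW (by norm_num) nhdsWithin_le_nhds hu.tendsto_nhdsGT_neg_one
      hu.tendsto_one_sub_sq_mul_deriv_nhdsGT_neg_one)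
    (hW (by norm_num) nhdsWithin_le_nhds hu.tendsto_nhdsLT_one
      hu.tendsto_one_sub_sq_mul_deriv_nhdsLT_one)
  rwa [sub_self] at this

end IsLegendreSolution

noncomputable def moment (u : ℝ → ℝ) (k : ℕ) : ℝ := ∫ x in (-1 : ℝ)..1, u x * x ^ k

theorem moment_sub_const_mul {u v : ℝ → ℝ} (hu : ContinuousOn u (Icc (-1) 1))
    (hv : ContinuousOn v (Icc (-1) 1)) (c : ℝ) (k : ℕ) :
    moment (fun x => u x - c * v x) k = moment u k - c * moment v k := by
  have hint : ∀ {f : ℝ → ℝ}, ContinuousOn f (Icc (-1) 1) →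
      IntervalIntegrable (fun x => f x * x ^ k) volume (-1) 1 :=
    fun hf => (hf.mul (continuousOn_pow k)).intervalIntegrable_of_Icc (by norm_num)
  rw [moment, moment, moment, ← integral_const_mul, ← integral_sub (hint hu)
    ((hint hv).const_mul c)]
  congr 1 with x
  ring

theorem moment_eq_zero_of_odd {u : ℝ → ℝ} (heven : ∀ x ∈ Icc (-1 : ℝ) 1, u (-x) = u x)
    {k : ℕ} (hk : Odd k) : moment u k = 0 := by
  have h := integral_comp_neg (a := -1) (b := 1) fun x => u x * x ^ k
  rw [neg_neg] at h
  change _ = moment u k at h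
  have : ∫ x in (-1 : ℝ)..1, u (-x) * (-x) ^ k = -moment u k := by
    rw [moment, ← integral_neg]
    refine integral_congr fun x hx => ?_
    rw [uIcc_of_le (by norm_num)] at hx
    simp only [heven x hx, hk.neg_pow]
    ring
  linarith

theorem eqOn_zero_of_integral_sq_eq_zero {v : ℝ → ℝ} {a b : ℝ} (hab : a < b)
    (hv : ContinuousOn v (Icc a b)) (h : ∫ x in a..b, v x ^ 2 = 0) : EqOn v 0 (Icc a b) := by
  rw [integral_eq_zero_iff_of_le_of_nonneg_ae hab.le (ae_of_all _ fun x => sq_nonneg _)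
    ((hv.pow 2).intervalIntegrable_of_Icc hab.le),
    Measure.restrict_congr_set Ioc_ae_eq_Icc] at h
  intro x hx
  exact pow_eq_zero_iff two_ne_zero |>.1
    (Measure.eqOn_Icc_of_ae_eq _ hab.ne h (hv.pow 2) continuousOn_const hx)

theorem intervalIntegrable_mul_eval {v : ℝ → ℝ} (hv : ContinuousOn v (Icc (-1) 1)) (p : ℝ[X]) :
    IntervalIntegrable (fun x => v x * p.eval x) volume (-1) 1 :=
  (hv.mul p.continuousOn).intervalIntegrable_of_Icc (by norm_num)

theorem integral_mul_eval_eq_zero_of_moment_eq_zero {v : ℝ → ℝ}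
    (hv : ContinuousOn v (Icc (-1) 1)) (hm : ∀ k, moment v k = 0) (p : ℝ[X]) :
    ∫ x in (-1 : ℝ)..1, v x * p.eval x = 0 := by
  induction p using Polynomial.induction_on' with
  | add p q hp hq =>
    simp only [eval_add, mul_add]
    rw [integral_add (intervalIntegrable_mul_eval hv p) (intervalIntegrable_mul_eval hv q), hp, hq,
      add_zero]
  | monomial n a =>
    simp only [eval_monomial, mul_left_comm (v _), integral_const_mul]
    rw [← moment, hm, mul_zero]

theorem eqOn_zero_of_moment_eq_zero {v : ℝ → ℝ} (hv : ContinuousOn v (Icc (-1) 1))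
    (hm : ∀ k, moment v k = 0) : EqOn v 0 (Icc (-1) 1) := by
  obtain ⟨M, hM⟩ := isCompact_Icc.exists_bound_of_continuousOn hv
  have hsq : ∀ ε > 0, ∫ x in (-1 : ℝ)..1, v x ^ 2 ≤ 2 * M * ε := by
    intro ε hε
    obtain ⟨p, hp⟩ := exists_polynomial_near_of_continuousOn (-1) 1 v hv ε hε
    have hsplit : ∫ x in (-1 : ℝ)..1, v x ^ 2 = ∫ x in (-1 : ℝ)..1, v x * (v x - p.eval x) := by
      rw [integral_congr fun x _ => (by ring : v x * (v x - p.eval x) = v x ^ 2 - v x * p.eval x),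
        integral_sub ((hv.pow 2).intervalIntegrable_of_Icc (u := fun x => v x ^ 2) (by norm_num))
          (intervalIntegrable_mul_eval hv p),
        integral_mul_eval_eq_zero_of_moment_eq_zero hv hm, sub_zero]
    calc ∫ x in (-1 : ℝ)..1, v x ^ 2
        ≤ ‖∫ x in (-1 : ℝ)..1, v x * (v x - p.eval x)‖ := hsplit ▸ le_abs_self _
      _ ≤ M * ε * |1 - (-1)| := norm_integral_le_of_norm_le_const fun x hx => by
          have hx : x ∈ Icc (-1 : ℝ) 1 := by
            rw [uIoc_of_le (by norm_num)] at hx; exact Ioc_subset_Icc_self hx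
          rw [norm_mul, Real.norm_eq_abs (_ - _), abs_sub_comm]
          exact mul_le_mul (hM x hx) (hp x hx).le (abs_nonneg _) ((norm_nonneg _).trans (hM x hx))
      _ = 2 * M * ε := by norm_num; ring
  refine eqOn_zero_of_integral_sq_eq_zero (by norm_num) hv (le_antisymm ?_
    (integral_nonneg (by norm_num) fun x _ => sq_nonneg _))
  refine ge_of_tendsto (f := fun ε => 2 * M * ε) (x := 𝓝[>] 0) ?_
    (eventually_nhdsWithin_of_forall hsq)
  simpa using ((by fun_prop : Continuous fun ε : ℝ => 2 * M * ε).tendsto 0).mono_left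
    nhdsWithin_le_nhds

/-- The relations `∫ u ((1 - x²) q'' - 2x q' + μ q) = 0` for `q = Xᵏ`, written for `m k = ∫ u xᵏ`;
for `k < 2` the factor `k (k - 1)` kills the junk term `m (k - 2)`. -/
def IsLegendreMomentSeq (μ : ℝ) (m : ℕ → ℝ) : Prop :=
  ∀ k : ℕ, (k * (k - 1) : ℝ) * m (k - 2) + (μ - k * (k + 1)) * m k = 0

namespace IsLegendreMomentSeq

variable {μ : ℝ} {m p : ℕ → ℝ}

theorem mul_sub_mul (hm : IsLegendreMomentSeq μ m) (hp : IsLegendreMomentSeq μ p) (a c : ℝ) :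
    IsLegendreMomentSeq μ fun k => a * m k - c * p k :=
  fun k => by linear_combination a * hm k - c * hp k

theorem eq_zero (hm : IsLegendreMomentSeq μ m) (hres : ∀ k : ℕ, μ = k * (k + 1) → m k = 0)
    (k : ℕ) : m k = 0 := by
  induction k using Nat.strong_induction_on with
  | _ k ih =>
    by_cases hμ : μ = k * (k + 1)
    · exact hres k hμ
    have hprev : (k * (k - 1) : ℝ) * m (k - 2) = 0 := by
      rcases Nat.lt_or_ge k 2 with hk | hk
      · interval_cases k <;> simp
      · rw [ih (k - 2) (by omega), mul_zero]
    have := hm k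
    rw [hprev, zero_add] at this
    exact (mul_eq_zero.1 this).resolve_left (sub_ne_zero.2 hμ)

end IsLegendreMomentSeq

theorem IsLegendreSolution.isLegendreMomentSeq {μ : ℝ} {u : ℝ → ℝ}
    (hu : IsLegendreSolution μ u) : IsLegendreMomentSeq μ (moment u) := by
  intro k
  have hint : ∀ j : ℕ, IntervalIntegrable (fun x => u x * x ^ j) volume (-1) 1 :=
    fun j => (hu.continuousOn.mul (continuousOn_pow j)).intervalIntegrable_of_Icc (by norm_num)
  rw [← hu.integral_mul_eval_eq_zero (X ^ k), moment, moment, ← integral_const_mul,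
    ← integral_const_mul, ← integral_add ((hint _).const_mul _) ((hint _).const_mul _)]
  refine integral_congr fun x _ => ?_
  rcases k with _ | _ | k <;>
    simp only [derivative_X_pow, derivative_C_mul, eval_mul, eval_C, eval_pow, eval_X] <;>
    push_cast <;> ring

theorem IsLegendreSolution.eqOn_zero {μ : ℝ} {u : ℝ → ℝ} (hu : IsLegendreSolution μ u)
    (hres : ∀ k : ℕ, μ = k * (k + 1) → moment u k = 0) : EqOn u 0 (Icc (-1) 1) :=
  eqOn_zero_of_moment_eq_zero hu.continuousOn (hu.isLegendreMomentSeq.eq_zero hres)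

theorem isLegendreSolution_legendre (l : ℕ) :
    IsLegendreSolution (l * (l + 1)) fun x => (legendre l).eval x := by
  have hd : ∀ p : ℝ[X], deriv (fun x => p.eval x) = fun x => (derivative p).eval x :=
    fun p => funext fun _ => p.deriv
  refine ⟨(legendre l).continuousOn, (legendre l).differentiable.differentiableOn, ?_,
    fun x _ => ?_⟩
  · rw [hd]
    exact (derivative _).differentiable.differentiableOn
  · rw [hd, hd]
    simpa using congrArg (eval x) (legendre_ode l)

theorem eq_of_natCast_mul_add_one_eq {k l : ℕ} (h : (k * (k + 1) : ℝ) = l * (l + 1)) :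
    k = l := by
  have hprod : ((k : ℝ) - l) * (k + l + 1) = 0 := by linear_combination h
  rcases mul_eq_zero.1 hprod with hkl | hkl
  · exact_mod_cast sub_eq_zero.1 hkl
  · linarith [(by positivity : (0 : ℝ) < k + l + 1)]

theorem moment_legendre_self_ne_zero (l : ℕ) : moment (fun x => (legendre l).eval x) l ≠ 0 := by
  intro h
  apply legendre_ne_zero l
  refine eq_zero_of_infinite_isRoot _
    ((Icc_infinite (by norm_num : (-1 : ℝ) < 1)).mono fun x hx => ?_)
  refine (isLegendreSolution_legendre l).eqOn_zero (fun k hk => ?_) hx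
  rwa [eq_of_natCast_mul_add_one_eq hk.symm]

theorem IsLegendreSolution.exists_eqOn_const_mul_legendre {l : ℕ} {u : ℝ → ℝ}
    (hu : IsLegendreSolution (l * (l + 1)) u) :
    ∃ C : ℝ, EqOn u (fun x => C * (legendre l).eval x) (Icc (-1) 1) := by
  set P := fun x => (legendre l).eval x
  have hP := isLegendreSolution_legendre l
  have hPl : moment P l ≠ 0 := moment_legendre_self_ne_zero l
  -- `p_l m - m_l p` satisfies the recurrence and vanishes at `l`, the only resonant index.
  have hcross := (hu.isLegendreMomentSeq.mul_sub_mul hP.isLegendreMomentSeq (moment P l)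
    (moment u l)).eq_zero fun k hk => by rw [eq_of_natCast_mul_add_one_eq hk.symm]; ring
  refine ⟨moment u l / moment P l, fun x hx => ?_⟩
  have := eqOn_zero_of_moment_eq_zero (v := fun x => u x - moment u l / moment P l * P x)
    (hu.continuousOn.sub (continuousOn_const.mul hP.continuousOn))
    (fun k => by
      rw [moment_sub_const_mul hu.continuousOn hP.continuousOn]
      field_simp
      linear_combination hcross k) hx
  simpa [sub_eq_zero] using this

theorem IsLegendreSolution.exists_eqOn_legendre_of_even {μ : ℝ} {u : ℝ → ℝ}
    (hu : IsLegendreSolution μ u) (hμ : μ ≠ 0) (heven : ∀ x ∈ Icc (-1 : ℝ) 1, u (-x) = u x)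
    (hne : ¬ EqOn u 0 (Icc (-1) 1)) :
    ∃ n : ℕ, 0 < n ∧ μ = 2 * n * (2 * n + 1) ∧
      ∃ C : ℝ, C ≠ 0 ∧ EqOn u (fun x => C * (legendre (2 * n)).eval x) (Icc (-1) 1) := by
  obtain ⟨l, rfl, hl⟩ : ∃ l : ℕ, μ = l * (l + 1) ∧ moment u l ≠ 0 := by
    by_contra! h
    exact hne (hu.eqOn_zero h)
  obtain ⟨n, rfl⟩ : 2 ∣ l :=
    (Nat.not_odd_iff_even.1 fun h => hl (moment_eq_zero_of_odd heven h)).two_dvd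
  obtain ⟨C, hC⟩ := hu.exists_eqOn_const_mul_legendre
  refine ⟨n, Nat.pos_of_ne_zero fun h => hμ (by simp [h]), by push_cast; ring, C,
    fun h => hne fun x hx => by simp [hC hx, h], hC⟩

theorem integral_div_sqrt_one_sub_sq_eq_integral_cos (f : ℝ → ℝ) :
    ∫ y in (-1 : ℝ)..1, f y / √(1 - y ^ 2) = ∫ θ in (0 : ℝ)..π, f (cos θ) := by
  rw [← Polynomial.Chebyshev.integral_measureT_eq_integral_cos,
    Polynomial.Chebyshev.integral_measureT]
  simp only [div_eq_mul_inv, Real.sqrt_inv]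

theorem integral_div_sqrt_one_sub_sq_of_eqOn_const {b : ℝ → ℝ} {c : ℝ}
    (hb : ∀ x ∈ Icc (-1 : ℝ) 1, b x = c) : ∫ y in (-1 : ℝ)..1, b y / √(1 - y ^ 2) = π * c := by
  rw [integral_congr fun y hy => by rw [hb y (by rwa [uIcc_of_le (by norm_num)] at hy)],
    integral_div_sqrt_one_sub_sq_eq_integral_cos]
  simp

theorem isLegendreSolution_add_div {α lam : ℝ} {b : ℝ → ℝ} (hα : α ≠ 0)
    (hcont : ContinuousOn b (Icc (-1) 1)) (hC2 : ContDiffOn ℝ 2 b (Ioo (-1) 1))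
    (heq : ∀ x ∈ Ioo (-1 : ℝ) 1,
      (1 - x ^ 2) * deriv (deriv b) x - 2 * x * deriv b x - α * b x = lam) :
    IsLegendreSolution (-α) fun x => b x + lam / α := by
  refine ⟨hcont.add continuousOn_const, (hC2.differentiableOn two_ne_zero).add_const _, ?_,
    fun x hx => ?_⟩ <;> rw [deriv_add_const']
  · exact (hC2.deriv_of_isOpen isOpen_Ioo (by norm_num)).differentiableOn one_ne_zero
  · field_simp
    linear_combination heq x hx

/-- Classification of the even continuous solutions of the nonlocal Legendre-type equation
`(1 − x²)b'' − 2x b' − α b = λ := (κ/π)∫_{−1}^{1} b(y)/√(1 − y²) dy` with `κ > 2`,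
`α ≠ 0`: a not-identically-zero solution is either a nonzero constant with `α = −κ`,
or of the form `B·P_{2n} − λ/α` with `B ≠ 0`, `n ≥ 1`, `α = −2n(2n+1)`.
In particular `α ≤ −min(κ, 6) < −2`. -/
theorem nonlocal_legendre_classification (κ α : ℝ) (hκ : 2 < κ) (hα : α ≠ 0)
    (b : ℝ → ℝ)
    (hcont : ContinuousOn b (Set.Icc (-1) 1))
    (heven : ∀ x ∈ Set.Icc (-1:ℝ) 1, b (-x) = b x)
    (hC2 : ContDiffOn ℝ 2 b (Set.Ioo (-1) 1))
    (hne : ¬ ∀ x ∈ Set.Icc (-1:ℝ) 1, b x = 0)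
    (lam : ℝ) (hlam : lam = (κ/π) * ∫ y in (-1:ℝ)..1, b y / Real.sqrt (1 - y^2))
    (heq : ∀ x ∈ Set.Ioo (-1:ℝ) 1,
      (1 - x^2) * deriv (deriv b) x - 2 * x * deriv b x - α * b x = lam) :
    (((∃ c : ℝ, c ≠ 0 ∧ ∀ x ∈ Set.Icc (-1:ℝ) 1, b x = c) ∧ α = -κ) ∨
      (∃ n : ℕ, 0 < n ∧ ∃ B : ℝ, B ≠ 0 ∧ α = -(2*(n:ℝ)) * (2*(n:ℝ) + 1) ∧
        ∀ x ∈ Set.Icc (-1:ℝ) 1, b x = B * (legendre (2*n)).eval x - lam/α)) ∧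
    α ≤ -min κ 6 ∧ -min κ 6 < -2 := by
  have hmin : -min κ 6 < -2 := neg_lt_neg (lt_min hκ (by norm_num))
  by_cases hconst : ∀ x ∈ Icc (-1 : ℝ) 1, b x = -(lam / α)
  · have hc : -(lam / α) ≠ 0 := fun h => hne fun x hx => (hconst x hx).trans h
    have hακ : α = -κ := by
      have hlam0 : lam ≠ 0 := fun h => hc (by simp [h])
      rw [integral_div_sqrt_one_sub_sq_of_eqOn_const hconst] at hlam
      field_simp at hlam
      exact hlam
    exact ⟨Or.inl ⟨⟨_, hc, hconst⟩, hακ⟩, hακ.trans_le (neg_le_neg (min_le_left κ 6)), hmin⟩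
  · have hsol := isLegendreSolution_add_div hα hcont hC2 heq
    obtain ⟨n, hn, hαn, C, hC, hbC⟩ := hsol.exists_eqOn_legendre_of_even (neg_ne_zero.2 hα)
      (fun x hx => by simp only [heven x hx])
      fun h => hconst fun x hx => eq_neg_iff_add_eq_zero.2 (h hx)
    refine ⟨Or.inr ⟨n, hn, C, hC, by linarith, fun x hx => by linarith [hbC hx]⟩, ?_, hmin⟩
    have hn1 : (1 : ℝ) ≤ n := by exact_mod_cast hn
    nlinarith [min_le_right κ 6]
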